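/- Let n ≥ 2 and τ ∈ ℝ. Define, for Ψ = (α,β) and Φ = (α',β') in ℂⁿ ⊕ ℂⁿ, the bilinear map μ₀τ(Ψ,Φ) = P(ΨΦ*) + τQ(ΨΦ*) with P, Q as the orthogonal projections onto sl(ℂ²)⊗sl(ℂⁿ) and sl(ℂ²)⊗ℂ·Id respectively. If μ₀τ(Ψ,Φ) = 0, then Ψ = 0 or Φ = 0. -/
import Mathlib


open Matrix

/-- `{M}_τ = M - ((1-τ)/n)·tr(M)·Id`. -/
noncomputable def brace {n : ℕ} (τ : ℝ) (M : Matrix (Fin n) (Fin n) ℂ) :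
    Matrix (Fin n) (Fin n) ℂ :=
  M - (((1 - τ : ℂ) / n) * M.trace) • 1

/-- The rank-one matrix `α β*` with entries `αᵢ · conj βⱼ`. -/
noncomputable def op {n : ℕ} (α β : Fin n → ℂ) : Matrix (Fin n) (Fin n) ℂ :=
  vecMulVec α (star β)

/-- The bilinear map `μ₀τ(Ψ,Φ) = P(ΨΦ*) + τ·Q(ΨΦ*)` on `ℂ² ⊗ ℂⁿ ≅ ℂⁿ ⊕ ℂⁿ`,
in `2 × 2` blocks of `n × n` matrices, for `Ψ = (α,β)`, `Φ = (α',β')`. -/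
noncomputable def mu {n : ℕ} (τ : ℝ) (α β α' β' : Fin n → ℂ) :
    Matrix (Fin n ⊕ Fin n) (Fin n ⊕ Fin n) ℂ :=
  fromBlocks ((1/2 : ℂ) • brace τ (op α α' - op β β')) (brace τ (op α β'))
    (brace τ (op β α')) ((1/2 : ℂ) • brace τ (op β β' - op α α'))

/-- A rank-one matrix equal to a scalar matrix has a zero factor (when `n ≥ 2`). -/
lemma rankone_scalar {n : ℕ} (hn : 2 ≤ n) (a b : Fin n → ℂ) (c : ℂ)
    (h : vecMulVec a b = c • (1 : Matrix (Fin n) (Fin n) ℂ)) :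
    a = 0 ∨ b = 0 := by
  have h' : ∀ i j, a i * b j = c * (if i = j then 1 else 0) := by
    intro i j
    have := congrFun (congrFun h i) j
    simpa [vecMulVec_apply, Matrix.smul_apply, Matrix.one_apply] using this
  set i0 : Fin n := ⟨0, by omega⟩
  set i1 : Fin n := ⟨1, by omega⟩
  have hne : i0 ≠ i1 := by
    simp [i0, i1, Fin.ext_iff]
  have hc : c = 0 := by
    by_contra hc
    have h00 : a i0 * b i0 = c := by simpa using h' i0 i0
    have h11 : a i1 * b i1 = c := by simpa using h' i1 i1
    have h01 : a i0 * b i1 = 0 := by simpa [hne] using h' i0 i1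
    rcases mul_eq_zero.mp h01 with ha | hb
    · exact hc (by rw [← h00, ha, zero_mul])
    · exact hc (by rw [← h11, hb, mul_zero])
  by_cases ha : a = 0
  · exact Or.inl ha
  · right
    obtain ⟨i, hi⟩ := Function.ne_iff.mp ha
    funext j
    have := h' i j
    rw [hc, zero_mul] at this
    rcases mul_eq_zero.mp this with h1 | h2
    · exact absurd h1 hi
    · exact h2

/-- From `brace τ M = 0` we get that `M` is a scalar matrix. -/
lemma brace_eq_zero {n : ℕ} {τ : ℝ} {M : Matrix (Fin n) (Fin n) ℂ}
    (h : brace τ M = 0) :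
    M = (((1 - τ : ℂ) / n) * M.trace) • 1 := by
  have := sub_eq_zero.mp h
  exact this

/-- for `n ≥ 2` the bilinear map `μ₀τ` is without zero-divisors:
`μ₀τ(Ψ,Φ) = 0` implies `Ψ = 0` or `Φ = 0`. -/
theorem stmt_5 (n : ℕ) (hn : 2 ≤ n) (τ : ℝ) (α β α' β' : Fin n → ℂ)
    (h : mu τ α β α' β' = 0) :
    (α = 0 ∧ β = 0) ∨ (α' = 0 ∧ β' = 0) := by
  have h12 : brace τ (op α β') = 0 := by
    funext i j
    have := congrFun (congrFun h (Sum.inl i)) (Sum.inr j)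
    simpa [mu, fromBlocks] using this
  have h21 : brace τ (op β α') = 0 := by
    funext i j
    have := congrFun (congrFun h (Sum.inr i)) (Sum.inl j)
    simpa [mu, fromBlocks] using this
  have h11 : brace τ (op α α' - op β β') = 0 := by
    have h11' : (1/2 : ℂ) • brace τ (op α α' - op β β') = 0 := by
      funext i j
      have := congrFun (congrFun h (Sum.inl i)) (Sum.inl j)
      simpa [mu, fromBlocks] using this
    rcases smul_eq_zero.mp h11' with hc | hm
    · norm_num at hc
    · exact hm
  have key12 := rankone_scalar hn α (star β') _ (brace_eq_zero h12)
  have key21 := rankone_scalar hn β (star α') _ (brace_eq_zero h21)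
  have hM := brace_eq_zero h11
  set c : ℂ := ((1 - τ : ℂ) / n) * (op α α' - op β β').trace with hcdef
  rcases key12 with hα | hβ'
  · rcases key21 with hβ | hα'
    · exact Or.inl ⟨hα, hβ⟩
    · -- α = 0, α' = 0 : third block gives op β β' scalar
      have hα' : α' = 0 := star_eq_zero.mp hα'
      have hopαα' : op α α' = 0 := by
        funext i j; simp [op, vecMulVec_apply, hα]
      have : vecMulVec β (star β') = (-c) • 1 := by
        have := hM
        rw [hopαα'] at this
        simp only [zero_sub, op] at this
        have := neg_eq_iff_eq_neg.mp this
        rw [this]; simp [c, hopαα']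
      rcases rankone_scalar hn β (star β') _ this with hβ | hβ'
      · exact Or.inl ⟨hα, hβ⟩
      · exact Or.inr ⟨hα', star_eq_zero.mp hβ'⟩
  · rcases key21 with hβ | hα'
    · -- β' = 0 (as star), β = 0 : third block gives op α α' scalar
      have hβ' : β' = 0 := star_eq_zero.mp hβ'
      have hopββ' : op β β' = 0 := by
        funext i j; simp [op, vecMulVec_apply, hβ]
      have : vecMulVec α (star α') = c • 1 := by
        have := hM
        rw [hopββ'] at this
        simpa [op, c, hopββ'] using this
      rcases rankone_scalar hn α (star α') _ this with hα | hα'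
      · exact Or.inl ⟨hα, hβ⟩
      · exact Or.inr ⟨star_eq_zero.mp hα', hβ'⟩
    · exact Or.inr ⟨star_eq_zero.mp hα', star_eq_zero.mp hβ'⟩
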